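/- Let Φ be a dictionary of K unit-norm atoms with cumulative coherence μ₁, let y = Φ_Δ x for a support Δ of size S and coefficient vector x with smallest absolute coefficient |x_min| and largest |x|_∞, and suppose |x_min|/‖x‖_∞ > μ₁(S−1) + μ₁(S). Then the thresholding margin η satisfies η² ≥ (|x_min|/‖x‖_∞ − μ₁(S−1) − μ₁(S))² / (S(1 + μ₁(S−1))). -/
import Mathlib

open scoped RealInnerProductSpace

/-- Lower bound on the thresholding margin `η` in terms of the cumulative coherence
(Babel function) `μ₁`, the sparsity `S`, and the ratio of the smallest to largest
coefficients: `η² ≥ (|x_min|/‖x‖_∞ − μ₁(S−1) − μ₁(S))² / (S(1 + μ₁(S−1)))`. -/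
theorem eta_coherence_bound {N K S : ℕ} (hS : 0 < S)
    (Φ : Fin K → EuclideanSpace ℝ (Fin N)) (hΦ : ∀ i, ‖Φ i‖ = 1)
    (μ₁ : ℕ → ℝ) (hμ0 : ∀ m, 0 ≤ μ₁ m)
    (hμ : ∀ (m : ℕ) (i : Fin K) (Λ : Finset (Fin K)), Λ.card = m → i ∉ Λ →
      ∑ j ∈ Λ, |⟪Φ j, Φ i⟫| ≤ μ₁ m)
    (Δ : Finset (Fin K)) (hΔ : Δ.card = S)
    (hne : Δ.Nonempty) (hne' : Δᶜ.Nonempty)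
    (x : Fin K → ℝ) (hx0 : ∀ i ∈ Δ, x i ≠ 0)
    (y : EuclideanSpace ℝ (Fin N)) (hy : y = ∑ i ∈ Δ, x i • Φ i) (hynz : y ≠ 0)
    (hratio : μ₁ (S - 1) + μ₁ S <
      Δ.inf' hne (fun i => |x i|) / Δ.sup' hne (fun i => |x i|))
    (η : ℝ)
    (hη : η = Δ.inf' hne (fun i => |⟪y, Φ i⟫| / ‖y‖)
            - Δᶜ.sup' hne' (fun i => |⟪y, Φ i⟫| / ‖y‖)) :
    η ^ 2 ≥ (Δ.inf' hne (fun i => |x i|) / Δ.sup' hne (fun i => |x i|)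
              - μ₁ (S - 1) - μ₁ S) ^ 2
            / (S * (1 + μ₁ (S - 1))) := by
  classical
  set A := Δ.inf' hne (fun i => |x i|) with hA
  set B := Δ.sup' hne (fun i => |x i|) with hB
  set μa := μ₁ (S - 1) with hμa
  set μb := μ₁ S with hμb
  obtain ⟨i0, hi0⟩ := id hne
  have hB0 : 0 < B :=
    lt_of_lt_of_le (abs_pos.mpr (hx0 i0 hi0)) (Finset.le_sup' (fun i => |x i|) hi0)
  have hy0 : 0 < ‖y‖ := norm_pos_iff.mpr hynz
  have hAle : ∀ i ∈ Δ, A ≤ |x i| := fun i hi => Finset.inf'_le (fun i => |x i|) hi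
  have hleB : ∀ i ∈ Δ, |x i| ≤ B := fun i hi => Finset.le_sup' (fun i => |x i|) hi
  have hinner : ∀ i, ⟪y, Φ i⟫ = ∑ j ∈ Δ, x j * ⟪Φ j, Φ i⟫ := by
    intro i
    rw [hy, sum_inner]
    exact Finset.sum_congr rfl fun j _ => real_inner_smul_left _ _ _
  -- decomposition for i ∈ Δ
  have hdec : ∀ i ∈ Δ, ⟪y, Φ i⟫ = x i + ∑ j ∈ Δ.erase i, x j * ⟪Φ j, Φ i⟫ := by
    intro i hi
    rw [hinner, ← Finset.add_sum_erase _ _ hi]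
    have h1 : ⟪Φ i, Φ i⟫ = 1 := by
      rw [real_inner_self_eq_norm_sq, hΦ]; norm_num
    rw [h1, mul_one]
  have htail : ∀ i ∈ Δ, ∑ j ∈ Δ.erase i, |x j * ⟪Φ j, Φ i⟫| ≤ B * μa := by
    intro i hi
    have h2 : ∑ j ∈ Δ.erase i, |⟪Φ j, Φ i⟫| ≤ μa := by
      apply hμ (S - 1) i (Δ.erase i) _ (Finset.notMem_erase i Δ)
      rw [Finset.card_erase_of_mem hi, hΔ]
    calc ∑ j ∈ Δ.erase i, |x j * ⟪Φ j, Φ i⟫|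
        ≤ ∑ j ∈ Δ.erase i, B * |⟪Φ j, Φ i⟫| := by
          apply Finset.sum_le_sum
          intro j hj
          rw [abs_mul]
          exact mul_le_mul_of_nonneg_right (hleB j (Finset.mem_of_mem_erase hj))
            (abs_nonneg _)
      _ = B * ∑ j ∈ Δ.erase i, |⟪Φ j, Φ i⟫| := by rw [Finset.mul_sum]
      _ ≤ B * μa := mul_le_mul_of_nonneg_left h2 hB0.le
  have hlow : ∀ i ∈ Δ, A - B * μa ≤ |⟪y, Φ i⟫| := by
    intro i hi
    have h3 : |x i| ≤ |⟪y, Φ i⟫| + ∑ j ∈ Δ.erase i, |x j * ⟪Φ j, Φ i⟫| := by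
      have h4 : x i = ⟪y, Φ i⟫ - ∑ j ∈ Δ.erase i, x j * ⟪Φ j, Φ i⟫ := by
        rw [hdec i hi]; ring
      have h5 : |x i| ≤ |⟪y, Φ i⟫| + |∑ j ∈ Δ.erase i, x j * ⟪Φ j, Φ i⟫| := by
        rw [h4, sub_eq_add_neg]
        exact (abs_add_le _ _).trans (by rw [abs_neg])
      have habs := Finset.abs_sum_le_sum_abs (fun j => x j * ⟪Φ j, Φ i⟫) (Δ.erase i)
      linarith
    linarith [hAle i hi, htail i hi]
  have hupΔ : ∀ i ∈ Δ, |⟪y, Φ i⟫| ≤ B * (1 + μa) := by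
    intro i hi
    rw [hdec i hi]
    calc |x i + ∑ j ∈ Δ.erase i, x j * ⟪Φ j, Φ i⟫|
        ≤ |x i| + |∑ j ∈ Δ.erase i, x j * ⟪Φ j, Φ i⟫| := abs_add_le _ _
      _ ≤ B + B * μa := by
          have := Finset.abs_sum_le_sum_abs (fun j => x j * ⟪Φ j, Φ i⟫) (Δ.erase i)
          linarith [hleB i hi, htail i hi]
      _ = B * (1 + μa) := by ring
  have hup : ∀ i ∉ Δ, |⟪y, Φ i⟫| ≤ B * μb := by
    intro i hi
    rw [hinner]
    calc |∑ j ∈ Δ, x j * ⟪Φ j, Φ i⟫|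
        ≤ ∑ j ∈ Δ, |x j * ⟪Φ j, Φ i⟫| := Finset.abs_sum_le_sum_abs _ _
      _ ≤ ∑ j ∈ Δ, B * |⟪Φ j, Φ i⟫| := by
          apply Finset.sum_le_sum
          intro j hj
          rw [abs_mul]
          exact mul_le_mul_of_nonneg_right (hleB j hj) (abs_nonneg _)
      _ = B * ∑ j ∈ Δ, |⟪Φ j, Φ i⟫| := by rw [Finset.mul_sum]
      _ ≤ B * μb := mul_le_mul_of_nonneg_left (hμ S i Δ hΔ hi) hB0.le
  -- norm bound
  have hynorm : ‖y‖ ^ 2 ≤ S * (B ^ 2 * (1 + μa)) := by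
    have h5 : ‖y‖ ^ 2 = ∑ i ∈ Δ, x i * ⟪y, Φ i⟫ := by
      rw [← real_inner_self_eq_norm_sq]
      nth_rewrite 2 [hy]
      rw [inner_sum]
      exact Finset.sum_congr rfl fun j _ => real_inner_smul_right _ _ _
    rw [h5]
    calc ∑ i ∈ Δ, x i * ⟪y, Φ i⟫
        ≤ ∑ i ∈ Δ, B * (B * (1 + μa)) := by
          apply Finset.sum_le_sum
          intro i hi
          calc x i * ⟪y, Φ i⟫ ≤ |x i * ⟪y, Φ i⟫| := le_abs_self _
            _ = |x i| * |⟪y, Φ i⟫| := abs_mul _ _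
            _ ≤ B * (B * (1 + μa)) := by
                apply mul_le_mul (hleB i hi) (hupΔ i hi) (abs_nonneg _) hB0.le
      _ = S * (B ^ 2 * (1 + μa)) := by
          rw [Finset.sum_const, hΔ, nsmul_eq_mul]; ring
  -- margin bound
  have hc0 : 0 < A - B * (μa + μb) := by
    have := (lt_div_iff₀ hB0).mp hratio
    linarith
  have hηlow : (A - B * (μa + μb)) / ‖y‖ ≤ η := by
    rw [hη]
    have h6 : (A - B * μa) / ‖y‖ ≤ Δ.inf' hne (fun i => |⟪y, Φ i⟫| / ‖y‖) := by
      apply Finset.le_inf'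
      intro i hi
      exact div_le_div_of_nonneg_right (hlow i hi) hy0.le
    have h7 : Δᶜ.sup' hne' (fun i => |⟪y, Φ i⟫| / ‖y‖) ≤ B * μb / ‖y‖ := by
      apply Finset.sup'_le
      intro i hi
      exact div_le_div_of_nonneg_right (hup i (Finset.mem_compl.mp hi)) hy0.le
    have : (A - B * (μa + μb)) / ‖y‖ = (A - B * μa) / ‖y‖ - B * μb / ‖y‖ := by
      rw [div_sub_div_same]
      congr 1
      ring
    linarith
  have hη0 : 0 < η := lt_of_lt_of_le (div_pos hc0 hy0) hηlow
  have hsq : ((A - B * (μa + μb)) / ‖y‖) ^ 2 ≤ η ^ 2 := by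
    apply pow_le_pow_left₀ (div_pos hc0 hy0).le hηlow
  rw [ge_iff_le]
  refine le_trans ?_ hsq
  rw [div_pow]
  have hS' : 0 < (S : ℝ) := Nat.cast_pos.mpr hS
  have hμa0 : 0 ≤ μa := hμ0 (S - 1)
  have hden0 : 0 < (S : ℝ) * (B ^ 2 * (1 + μa)) := by
    apply mul_pos hS'
    apply mul_pos (pow_pos hB0 2)
    linarith
  have key : (A / B - μa - μb) ^ 2 / (S * (1 + μa))
      = (A - B * (μa + μb)) ^ 2 / (S * (B ^ 2 * (1 + μa))) := by
    have h9 : A - B * (μa + μb) = B * (A / B - μa - μb) := by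
      field_simp
      ring
    rw [h9, mul_pow]
    rw [div_eq_div_iff (mul_pos hS' (by linarith)).ne' hden0.ne']
    ring
  rw [key]
  exact div_le_div_of_nonneg_left (by positivity) (pow_pos hy0 2) hynorm
  done
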